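/- Let G be a graph with Δ(G) ≥ 6 and L a list assignment with |L(v)| ≥ Δ(G)+3. Suppose u is a degree-3 vertex with one degree-2 neighbor v and two degree-3 neighbors. If G − {v} admits a 2-distance L-coloring, then G admits one: uncolor u, then color v and u in this order. -/

import Mathlib

open SimpleGraph

/-- Maximum average degree: the supremum over all nonempty subgraphs `H` of `2|E(H)|/|V(H)|`. -/
noncomputable def mad {V : Type} [Fintype V] (G : SimpleGraph V) : ℝ :=
  sSup {x : ℝ | ∃ H : G.Subgraph, H.verts.Nonempty ∧
    x = 2 * H.edgeSet.ncard / H.verts.ncard}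

/-- Two distinct vertices are at distance at most 2. -/
def TwoDistAdj {V : Type} (G : SimpleGraph V) (u v : V) : Prop :=
  u ≠ v ∧ (G.Adj u v ∨ ∃ w, G.Adj u w ∧ G.Adj w v)

/-- `φ` is a 2-distance coloring of `G` from the lists `L`: each vertex gets a color from
its list and vertices at distance at most 2 get distinct colors. -/
def IsTwoDistListColoring {V : Type} (G : SimpleGraph V) (L : V → Finset ℕ) (φ : V → ℕ) :
    Prop :=
  (∀ v, φ v ∈ L v) ∧ ∀ u v, TwoDistAdj G u v → φ u ≠ φ v

open Finset

/-! Uncolor `u`. The only pair at distance at most 2 in `G` but not in `G − v` is `u` and the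
other neighbor `w` of `v`, so the coloring of `G − v` is proper away from `u` and `v`. When `v`
is colored, the colored vertices it sees are its other neighbor, the two other neighbors of `u`
and at most `Δ − 1` other neighbors of `w`: at most `Δ + 2` colors. When `u` is colored, it sees
its 3 neighbors and the 1 + 2 + 2 other neighbors of these: `8 ≤ Δ + 2` colors. -/

variable {V : Type}

theorem TwoDistAdj.symm {G : SimpleGraph V} {x y : V} (h : TwoDistAdj G x y) :
    TwoDistAdj G y x := by
  obtain ⟨hne, hadj | ⟨z, hxz, hzy⟩⟩ := h
  · exact ⟨hne.symm, Or.inl hadj.symm⟩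
  · exact ⟨hne.symm, Or.inr ⟨z, hzy.symm, hxz.symm⟩⟩

/-- A 2-distance `L`-coloring of `G` in which the vertices of `S` count as uncolored: the values
of `φ` on `S` are ignored. -/
def IsTwoDistListColoringOff (G : SimpleGraph V) (L : V → Finset ℕ) (S : Set V)
    (φ : V → ℕ) : Prop :=
  (∀ x, x ∉ S → φ x ∈ L x) ∧ ∀ x y, x ∉ S → y ∉ S → TwoDistAdj G x y → φ x ≠ φ y

theorem isTwoDistListColoringOff_empty {G : SimpleGraph V} {L : V → Finset ℕ} {φ : V → ℕ} :
    IsTwoDistListColoringOff G L ∅ φ ↔ IsTwoDistListColoring G L φ := by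
  simp [IsTwoDistListColoringOff, IsTwoDistListColoring]

theorem IsTwoDistListColoringOff.exists_update [DecidableEq V] {G : SimpleGraph V}
    {L : V → Finset ℕ} {S : Set V} {x : V} {φ : V → ℕ}
    (hφ : IsTwoDistListColoringOff G L (insert x S) φ) (A : Finset V)
    (hA : ∀ y, y ∉ S → TwoDistAdj G x y → y ∈ A) (hcard : #A < #(L x)) :
    ∃ ψ, IsTwoDistListColoringOff G L S ψ := by
  obtain ⟨c, hcL, hcA⟩ := exists_mem_notMem_of_card_lt_card (card_image_le.trans_lt hcard)
  have hc : ∀ y, y ∉ S → TwoDistAdj G x y → c ≠ φ y := fun y hy hxy hcy =>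
    hcA (mem_image.mpr ⟨y, hA y hy hxy, hcy.symm⟩)
  refine ⟨Function.update φ x c, fun y hy => ?_, fun y z hy hz hyz => ?_⟩
  · rcases eq_or_ne y x with rfl | hyx
    · simpa using hcL
    · simpa [hyx] using hφ.1 y (by simp [hyx, hy])
  · rcases eq_or_ne y x with rfl | hyx
    · simpa [hyz.1.symm] using hc z hz hyz
    rcases eq_or_ne z x with rfl | hzx
    · simpa [hyx] using (hc y hy hyz.symm).symm
    simpa [hyx, hzx] using hφ.2 y z (by simp [hyx, hy]) (by simp [hzx, hz]) hyz

theorem exists_isTwoDistListColoringOff_of_induce {G : SimpleGraph V} [G.LocallyFinite]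
    {L : V → Finset ℕ} {u v : V} {φ₀ : {y // y ≠ v} → ℕ}
    (hφ₀ : IsTwoDistListColoring (G.induce {y | y ≠ v}) (fun y => L y.1) φ₀)
    (huv : G.Adj v u) (hv : G.degree v ≤ 2) :
    ∃ φ, IsTwoDistListColoringOff G L {v, u} φ := by
  classical
  have hother : ∀ x ∈ (G.neighborFinset v).erase u, ∀ y ∈ (G.neighborFinset v).erase u,
      x = y := by
    rw [← card_le_one, card_erase_of_mem (by simpa using huv), card_neighborFinset_eq_degree]
    omega
  refine ⟨fun x => if h : x = v then 0 else φ₀ ⟨x, h⟩, fun x hx => ?_,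
    fun x y hx hy hxy => ?_⟩
  · simp only [Set.mem_insert_iff, Set.mem_singleton_iff, not_or] at hx
    simpa [hx.1] using hφ₀.1 ⟨x, hx.1⟩
  simp only [Set.mem_insert_iff, Set.mem_singleton_iff, not_or] at hx hy
  simp only [hx.1, hy.1, dite_false]
  obtain ⟨hne, hxy⟩ := hxy
  refine hφ₀.2 ⟨x, hx.1⟩ ⟨y, hy.1⟩ ⟨fun h => hne (congrArg Subtype.val h), ?_⟩
  obtain hadj | ⟨z, hxz, hzy⟩ := hxy
  · exact Or.inl hadj
  rcases eq_or_ne z v with rfl | hzv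
  · exact absurd (hother x (by simp [hx.2, hxz.symm]) y (by simp [hy.2, hzy])) hne
  · exact Or.inr ⟨⟨z, hzv⟩, hxz, hzy⟩

def twoDistNeighborFinset [DecidableEq V] (G : SimpleGraph V) [G.LocallyFinite] (x : V) :
    Finset V :=
  G.neighborFinset x ∪ (G.neighborFinset x).biUnion fun z => (G.neighborFinset z).erase x

theorem mem_twoDistNeighborFinset_of_twoDistAdj [DecidableEq V] {G : SimpleGraph V}
    [G.LocallyFinite] {x y : V} (h : TwoDistAdj G x y) : y ∈ twoDistNeighborFinset G x := by
  obtain ⟨hne, hadj | ⟨z, hxz, hzy⟩⟩ := h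
  · exact mem_union_left _ (by simpa using hadj)
  · exact mem_union_right _ (mem_biUnion.mpr ⟨z, by simpa using hxz, by simp [hne.symm, hzy]⟩)

theorem card_twoDistNeighborFinset_le [DecidableEq V] (G : SimpleGraph V) [G.LocallyFinite]
    (x : V) :
    #(twoDistNeighborFinset G x) ≤ G.degree x + ∑ z ∈ G.neighborFinset x, (G.degree z - 1) := by
  refine (card_union_le _ _).trans (add_le_add (card_neighborFinset_eq_degree G x).le ?_)
  refine card_biUnion_le.trans (sum_le_sum fun z hz => ?_)
  rw [card_erase_of_mem (by simpa using (G.mem_neighborFinset x z).mp hz |>.symm),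
    card_neighborFinset_eq_degree]

theorem card_twoDistNeighborFinset_le_of_adj [Fintype V] [DecidableEq V] {G : SimpleGraph V}
    [DecidableRel G.Adj] {u v : V} (huv : G.Adj v u) :
    #(twoDistNeighborFinset G v) ≤
      G.degree v + (G.degree u - 1) + (G.degree v - 1) * (G.maxDegree - 1) := by
  have hu : u ∈ G.neighborFinset v := by simpa using huv
  have hrest : ∑ z ∈ (G.neighborFinset v).erase u, (G.degree z - 1) ≤
      (G.degree v - 1) * (G.maxDegree - 1) := by
    simpa [card_erase_of_mem hu] using sum_le_card_nsmul ((G.neighborFinset v).erase u)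
      (fun z => G.degree z - 1) (G.maxDegree - 1)
      fun z _ => Nat.sub_le_sub_right (G.degree_le_maxDegree z) 1
  calc #(twoDistNeighborFinset G v)
      ≤ G.degree v + ∑ z ∈ G.neighborFinset v, (G.degree z - 1) :=
        card_twoDistNeighborFinset_le G v
    _ = G.degree v +
          ((G.degree u - 1) + ∑ z ∈ (G.neighborFinset v).erase u, (G.degree z - 1)) := by
        rw [← add_sum_erase _ _ hu]
    _ ≤ _ := by omega

/-- If `Δ(G) ≥ 6`, lists have size at least `Δ(G) + 3`, and `u` is a 3-vertex with one
degree-2 neighbor `v` and two degree-3 neighbors, then any 2-distance list coloring of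
`G − {v}` extends to one of `G` (recolor `u` after coloring `v`). -/
theorem extend_coloring_100_vertex
    {V : Type} [Fintype V] [DecidableEq V] (G : SimpleGraph V) [DecidableRel G.Adj]
    (hΔ : 6 ≤ G.maxDegree)
    (L : V → Finset ℕ) (hL : ∀ y, G.maxDegree + 3 ≤ (L y).card)
    (u v a b : V) (hdu : G.degree u = 3)
    (huv : G.Adj u v) (hua : G.Adj u a) (hub : G.Adj u b)
    (hva : v ≠ a) (hvb : v ≠ b) (hab : a ≠ b)
    (hdv : G.degree v = 2) (hda : G.degree a = 3) (hdb : G.degree b = 3)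
    (hcol : ∃ φ, IsTwoDistListColoring (G.induce {y | y ≠ v}) (fun y => L y.1) φ) :
    ∃ φ : V → ℕ, IsTwoDistListColoring G L φ := by
  obtain ⟨φ₀, hφ₀⟩ := hcol
  obtain ⟨φ₁, hφ₁⟩ := exists_isTwoDistListColoringOff_of_induce hφ₀ huv.symm hdv.le
  have hv : #((twoDistNeighborFinset G v).erase u) < #(L v) := by
    have := card_twoDistNeighborFinset_le_of_adj huv.symm
    rw [hdv, hdu] at this
    rw [card_erase_of_mem
      (mem_twoDistNeighborFinset_of_twoDistAdj ⟨huv.ne.symm, .inl huv.symm⟩)]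
    have := hL v
    omega
  obtain ⟨φ₂, hφ₂⟩ := hφ₁.exists_update _ (fun y hy h =>
    mem_erase.mpr ⟨hy, mem_twoDistNeighborFinset_of_twoDistAdj h⟩) hv
  have hNu : G.neighborFinset u = {v, a, b} := by
    refine (eq_of_subset_of_card_le (by simp [insert_subset_iff, huv, hua, hub]) ?_).symm
    rw [card_neighborFinset_eq_degree, hdu, card_insert_of_notMem (by simp [hva, hvb]),
      card_pair hab]
  have hu : #(twoDistNeighborFinset G u) < #(L u) := by
    have := card_twoDistNeighborFinset_le G u
    rw [hNu, sum_insert (by simp [hva, hvb]), sum_pair hab, hdv, hda, hdb, hdu] at this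
    have := hL u
    omega
  rw [Set.singleton_def] at hφ₂
  obtain ⟨φ₃, hφ₃⟩ :=
    hφ₂.exists_update _ (fun _ _ h => mem_twoDistNeighborFinset_of_twoDistAdj h) hu
  exact ⟨φ₃, isTwoDistListColoringOff_empty.mp hφ₃⟩
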